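/- (Modular transformation of the Kronecker series) Let (a b; c d) ∈ SL₂(ℤ), let τ be in the upper half-plane, and let ξ, α ∈ ℂ be such that both Kronecker series values below are defined (i.e. the relevant theta denominators are nonzero). Then F_{(aτ+b)/(cτ+d)}( ξ/(cτ+d), α/(cτ+d) ) = (cτ+d) · e^{2πi c ξ α/(cτ+d)} · F_τ(ξ, α). -/

import Mathlib

noncomputable section

/-- The odd Jacobi theta function
`θ_τ(ξ) = Σ_{n ∈ ℤ} (-1)^n e^{πiτ(n+1/2)²} e^{2πi(n+1/2)ξ}`. -/
def theta (τ ξ : ℂ) : ℂ :=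
  ∑' n : ℤ, (-1 : ℂ) ^ n * Complex.exp (Real.pi * Complex.I * τ * ((n : ℂ) + 1 / 2) ^ 2) *
    Complex.exp (2 * Real.pi * Complex.I * ((n : ℂ) + 1 / 2) * ξ)

/-- The Kronecker series `F_τ(ξ, α) = θ'_τ(0)·θ_τ(ξ+α)/(θ_τ(ξ)·θ_τ(α))`. -/
def kronecker (τ ξ α : ℂ) : ℂ :=
  deriv (theta τ) 0 * theta τ (ξ + α) / (theta τ ξ * theta τ α)

/-!
In terms of Mathlib's `jacobiTheta₂`, `θ_τ(ξ) = e^{πi(τ/4 + ξ)} · jacobiTheta₂ (ξ + (τ+1)/2) τ`,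
so `θ` inherits the transformations under `τ ↦ τ + 1` and `τ ↦ -1/τ`. For every `γ ∈ SL₂(ℤ)`
this gives `θ_{γτ}(ξ/(cτ+d)) = μ · e^{πicξ²/(cτ+d)} · θ_τ(ξ)` with a multiplier `μ ≠ 0` that
does not depend on `ξ`: the `γ` with such a law form a subgroup, because the Gaussian exponents
compose through the cocycle `cτ + d`, and `S`, `T` generate `SL₂(ℤ)`. In `F_τ` the multiplier
cancels, `θ'(0)` picks up the factor `μ(cτ+d)`, and the Gaussians leave `e^{2πicξα/(cτ+d)}`.
-/

open Complex
open scoped Real UpperHalfPlane MatrixGroups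
open UpperHalfPlane (denom denom_ne_zero coe_specialLinearGroup_apply)

lemma theta_eq_exp_mul_jacobiTheta₂ (τ ξ : ℂ) :
    theta τ ξ = cexp (π * I * (τ / 4 + ξ)) * jacobiTheta₂ (ξ + (τ + 1) / 2) τ := by
  rw [jacobiTheta₂, ← tsum_mul_left]
  refine tsum_congr fun n ↦ ?_
  rw [← exp_pi_mul_I, ← exp_int_mul, jacobiTheta₂_term, ← exp_add, ← exp_add, ← exp_add]
  ring_nf

lemma differentiable_theta {τ : ℂ} (hτ : 0 < τ.im) : Differentiable ℂ (theta τ) := by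
  rw [funext (theta_eq_exp_mul_jacobiTheta₂ τ)]
  exact fun ξ ↦ (by fun_prop : DifferentiableAt ℂ _ ξ).mul
    ((differentiableAt_jacobiTheta₂_fst _ hτ).comp ξ (by fun_prop))

lemma theta_add_one (τ ξ : ℂ) : theta (τ + 1) ξ = cexp (π * I / 4) * theta τ ξ := by
  rw [theta, theta, ← tsum_mul_left]
  refine tsum_congr fun n ↦ ?_
  obtain ⟨k, hk⟩ := Int.even_mul_succ_self n
  have hexp : π * I * (τ + 1) * (n + 1 / 2) ^ 2 =
      π * I * τ * (n + 1 / 2) ^ 2 + π * I / 4 + k * (2 * π * I) := by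
    have : ((n * (n + 1) : ℤ) : ℂ) = k + k := by exact_mod_cast hk
    push_cast at this
    linear_combination π * I * this
  rw [hexp, exp_add, exp_add, exp_int_mul_two_pi_mul_I]
  ring

lemma theta_neg_inv_div (τ ξ : ℂ) (hτ : τ ≠ 0) :
    theta (-τ⁻¹) (ξ / τ) =
      -I * (-I * τ) ^ (1 / 2 : ℂ) * cexp (π * I * ξ ^ 2 / τ) * theta τ ξ := by
  have hpow : (-I * τ) ^ (1 / 2 : ℂ) ≠ 0 := by simp [cpow_eq_zero_iff, hτ]
  set z := ξ + (τ - 1) / 2 with hz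
  have hperiod : jacobiTheta₂ (ξ + (τ + 1) / 2) τ = jacobiTheta₂ z τ := by
    rw [← jacobiTheta₂_add_left z, hz]
    ring_nf
  have hfun : jacobiTheta₂ (z / τ) (-τ⁻¹) =
      (-I * τ) ^ (1 / 2 : ℂ) * cexp (π * I * z ^ 2 / τ) * jacobiTheta₂ z τ := by
    rw [jacobiTheta₂_functional_equation z τ]
    field_simp
    rw [mul_assoc, ← exp_add, add_neg_cancel, exp_zero, mul_one]
  have hexp : π * I * (-τ⁻¹ / 4 + ξ / τ) + π * I * z ^ 2 / τ =
      -π / 2 * I + π * I * ξ ^ 2 / τ + π * I * (τ / 4 + ξ) := by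
    rw [hz]
    field_simp
    ring
  rw [theta_eq_exp_mul_jacobiTheta₂, theta_eq_exp_mul_jacobiTheta₂, hperiod,
    show ξ / τ + (-τ⁻¹ + 1) / 2 = z / τ by rw [hz]; field_simp; ring, hfun]
  calc _ = (-I * τ) ^ (1 / 2 : ℂ) * cexp (π * I * (-τ⁻¹ / 4 + ξ / τ) + π * I * z ^ 2 / τ) *
        jacobiTheta₂ z τ := by rw [exp_add]; ring
    _ = _ := by rw [hexp, exp_add, exp_add, exp_neg_pi_div_two_mul_I]; ring

lemma denom_cocycle_SL2Z (g h : SL(2, ℤ)) (z : ℍ) :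
    denom ↑(g * h) z = denom g ↑(h • z) * denom h z := by
  rw [ModularGroup.sl_moeb, UpperHalfPlane.coe_smul_of_det_pos (by simp) z,
    ← UpperHalfPlane.denom_cocycle _ _ z.im_ne_zero, map_mul, map_mul]

/-- The cocycle relation of `denom`, differentiated logarithmically in `z`. -/
lemma apply_one_zero_div_denom_mul (g h : SL(2, ℤ)) (z : ℍ) :
    ((g * h) 1 0 : ℂ) / denom ↑(g * h) z =
      (g 1 0 : ℂ) / (denom g ↑(h • z) * denom h z ^ 2) + (h 1 0 : ℂ) / denom h z := by
  have hdet : (h 0 0 * h 1 1 - h 0 1 * h 1 0 : ℂ) = 1 := by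
    exact_mod_cast (Matrix.det_fin_two (h : Matrix (Fin 2) (Fin 2) ℤ)).symm.trans h.2
  have hc : ((g * h) 1 0 : ℂ) = g 1 0 * h 0 0 + g 1 1 * h 1 0 := by
    simp [Matrix.mul_apply, Fin.sum_univ_two]
  have hJ : denom h z = h 1 0 * z + h 1 1 := ModularGroup.denom_apply h z
  have hK : denom g ↑(h • z) * denom h z = g 1 0 * (h 0 0 * z + h 0 1) + g 1 1 * denom h z := by
    have hJ0 : (h 1 0 * z + h 1 1 : ℂ) ≠ 0 := hJ ▸ denom_ne_zero h z
    rw [ModularGroup.denom_apply, coe_specialLinearGroup_apply, hJ]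
    simp only [algebraMap_int_eq, eq_intCast, Complex.ofReal_intCast]
    rw [add_mul, mul_assoc, div_mul_cancel₀ _ hJ0]
  rw [denom_cocycle_SL2Z, hc]
  have hK0 := denom_ne_zero g (h • z)
  have hJ0 := denom_ne_zero h z
  generalize denom g ↑(h • z) = K at *
  generalize denom h z = J at *
  field_simp
  linear_combination (-(h 1 0 : ℂ)) * hK + (g 1 0 * h 0 0 : ℂ) * hJ + (g 1 0 : ℂ) * hdet

/-- The multiplier `μ` is an eighth root of unity times a branch of `√(cτ + d)`; it is left
unspecified since it cancels in the Kronecker series. -/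
def ThetaTransforms (γ : SL(2, ℤ)) : Prop :=
  ∀ τ : ℍ, ∃ μ : ℂ, μ ≠ 0 ∧ ∀ ξ : ℂ,
    theta ↑(γ • τ) (ξ / denom γ τ) = μ * cexp (π * I * (γ 1 0 / denom γ τ) * ξ ^ 2) * theta τ ξ

namespace ThetaTransforms

lemma mul {g h : SL(2, ℤ)} (hg : ThetaTransforms g) (hh : ThetaTransforms h) :
    ThetaTransforms (g * h) := by
  intro τ
  obtain ⟨μ₁, hμ₁, law₁⟩ := hg (h • τ)
  obtain ⟨μ₂, hμ₂, law₂⟩ := hh τ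
  refine ⟨μ₁ * μ₂, mul_ne_zero hμ₁ hμ₂, fun ξ ↦ ?_⟩
  rw [apply_one_zero_div_denom_mul, mul_smul, denom_cocycle_SL2Z, div_mul_eq_div_div_swap, law₁,
    law₂, mul_add, add_mul, exp_add]
  ring_nf

lemma inv {g : SL(2, ℤ)} (hg : ThetaTransforms g) : ThetaTransforms g⁻¹ := by
  intro τ
  obtain ⟨μ, hμ, law⟩ := hg (g⁻¹ • τ)
  refine ⟨μ⁻¹, inv_ne_zero hμ, fun ξ ↦ ?_⟩
  have hone : denom ↑(1 : SL(2, ℤ)) τ = 1 := by simp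
  have hcoc := denom_cocycle_SL2Z g g⁻¹ τ
  have hc := apply_one_zero_div_denom_mul g g⁻¹ τ
  rw [mul_inv_cancel, hone] at hcoc hc
  have hexp : π * I * (g⁻¹ 1 0 / denom (g⁻¹ : SL(2, ℤ)) τ) * ξ ^ 2 +
      π * I * (g 1 0 / denom g ↑(g⁻¹ • τ)) * (ξ / denom (g⁻¹ : SL(2, ℤ)) τ) ^ 2 = 0 := by
    simp only [Matrix.SpecialLinearGroup.coe_one, Matrix.one_apply_ne one_ne_zero, Int.cast_zero,
      div_one] at hc
    linear_combination (-π * I * ξ ^ 2) * hc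
  have hback := law (ξ / denom (g⁻¹ : SL(2, ℤ)) τ)
  rw [smul_inv_smul, ← div_mul_eq_div_div_swap, ← hcoc, div_one] at hback
  rw [hback]
  calc _ = (μ⁻¹ * μ) * cexp (π * I * (g⁻¹ 1 0 / denom (g⁻¹ : SL(2, ℤ)) τ) * ξ ^ 2 +
      π * I * (g 1 0 / denom g ↑(g⁻¹ • τ)) * (ξ / denom (g⁻¹ : SL(2, ℤ)) τ) ^ 2) *
        theta ↑(g⁻¹ • τ) (ξ / denom (g⁻¹ : SL(2, ℤ)) τ) := by
        rw [hexp, exp_zero, inv_mul_cancel₀ hμ]; ring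
    _ = _ := by rw [exp_add]; ring

end ThetaTransforms

lemma thetaTransforms_one : ThetaTransforms 1 :=
  fun _ ↦ ⟨1, one_ne_zero, fun ξ ↦ by simp⟩

lemma thetaTransforms_T : ThetaTransforms ModularGroup.T := by
  intro τ
  refine ⟨cexp (π * I / 4), exp_ne_zero _, fun ξ ↦ ?_⟩
  have hT : (↑(ModularGroup.T • τ) : ℂ) = τ + 1 := by
    rw [UpperHalfPlane.modular_T_smul, UpperHalfPlane.coe_vadd, add_comm]
    norm_num
  rw [hT, theta_add_one]
  simp [ModularGroup.denom_apply, ModularGroup.coe_T]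

lemma thetaTransforms_S : ThetaTransforms ModularGroup.S := by
  intro τ
  have hτ := UpperHalfPlane.ne_zero τ
  refine ⟨-I * (-I * τ) ^ (1 / 2 : ℂ), by simp [cpow_eq_zero_iff, hτ], fun ξ ↦ ?_⟩
  have hS : (↑(ModularGroup.S • τ) : ℂ) = -(τ : ℂ)⁻¹ := by
    rw [UpperHalfPlane.modular_S_smul, UpperHalfPlane.coe_mk, inv_neg]
  have hc : ((ModularGroup.S 1 0 : ℤ) : ℂ) = 1 := by simp [ModularGroup.coe_S]
  rw [hS, ModularGroup.denom_S, theta_neg_inv_div _ _ hτ, hc]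
  ring_nf

lemma thetaTransforms (γ : SL(2, ℤ)) : ThetaTransforms γ := by
  have hγ : γ ∈ Subgroup.closure {ModularGroup.S, ModularGroup.T} := by
    simp [SpecialLinearGroup.SL2Z_generators]
  induction hγ using Subgroup.closure_induction with
  | mem g hg =>
    rcases hg with rfl | rfl
    exacts [thetaTransforms_S, thetaTransforms_T]
  | one => exact thetaTransforms_one
  | mul g h _ _ hg hh => exact hg.mul hh
  | inv g _ hg => exact hg.inv

lemma deriv_theta_zero_of_theta_div_eq {τ τ' j μ κ : ℂ} (hτ : 0 < τ.im) (hj : j ≠ 0)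
    (h : ∀ ξ, theta τ' (ξ / j) = μ * cexp (κ * ξ ^ 2) * theta τ ξ) :
    deriv (theta τ') 0 = μ * j * deriv (theta τ) 0 := by
  have hfun : theta τ' = fun η ↦ μ * (cexp (κ * (j * η) ^ 2) * theta τ (j * η)) := by
    funext η
    rw [← mul_assoc, ← h, mul_div_cancel_left₀ η hj]
  have hlin : HasDerivAt (fun η : ℂ ↦ j * η) j 0 := by
    simpa using (hasDerivAt_id' (0 : ℂ)).const_mul j
  have hexp : HasDerivAt (fun η ↦ cexp (κ * (j * η) ^ 2)) 0 0 := by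
    simpa using ((hlin.pow 2).const_mul κ).cexp
  have htheta : HasDerivAt (fun η ↦ theta τ (j * η)) (deriv (theta τ) 0 * j) 0 :=
    (differentiable_theta hτ 0).hasDerivAt.comp_of_eq 0 hlin (mul_zero j).symm
  rw [hfun]
  refine ((hexp.mul htheta).const_mul μ).deriv.trans ?_
  simp only [mul_zero, zero_mul, zero_add, ne_eq, OfNat.ofNat_ne_zero, not_false_eq_true, zero_pow,
    exp_zero, one_mul]
  ring

lemma kronecker_div_eq_of_theta_div_eq {τ τ' j μ κ : ℂ} (hτ : 0 < τ.im) (hj : j ≠ 0) (hμ : μ ≠ 0)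
    (h : ∀ ξ, theta τ' (ξ / j) = μ * cexp (κ * ξ ^ 2) * theta τ ξ) (ξ α : ℂ) :
    kronecker τ' (ξ / j) (α / j) = j * cexp (2 * κ * ξ * α) * kronecker τ ξ α := by
  have hexp : cexp (κ * (ξ + α) ^ 2) =
      cexp (κ * ξ ^ 2) * cexp (κ * α ^ 2) * cexp (2 * κ * ξ * α) := by
    rw [← exp_add, ← exp_add]
    ring_nf
  have hne : μ ^ 2 * cexp (κ * ξ ^ 2) * cexp (κ * α ^ 2) ≠ 0 := by simp [hμ, exp_ne_zero]
  rw [kronecker, kronecker, deriv_theta_zero_of_theta_div_eq hτ hj h, ← add_div, h, h, h, hexp]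
  calc _ = μ ^ 2 * cexp (κ * ξ ^ 2) * cexp (κ * α ^ 2) *
        (j * cexp (2 * κ * ξ * α) * (deriv (theta τ) 0 * theta τ (ξ + α))) /
        (μ ^ 2 * cexp (κ * ξ ^ 2) * cexp (κ * α ^ 2) * (theta τ ξ * theta τ α)) := by ring
    _ = _ := by rw [mul_div_mul_left _ _ hne, mul_div_assoc]

theorem kronecker_modular_general (a b c d : ℤ) (habcd : a * d - b * c = 1)
    (τ ξ α : ℂ) (hτ : 0 < τ.im) :
    kronecker (((a : ℂ) * τ + b) / ((c : ℂ) * τ + d))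
        (ξ / ((c : ℂ) * τ + d)) (α / ((c : ℂ) * τ + d)) =
      ((c : ℂ) * τ + d) *
        Complex.exp (2 * Real.pi * Complex.I * c * ξ * α / ((c : ℂ) * τ + d)) *
        kronecker τ ξ α := by
  let γ : SL(2, ℤ) := ⟨!![a, b; c, d], by simp [Matrix.det_fin_two_of, habcd]⟩
  let z : ℍ := ⟨τ, hτ⟩
  have hγz : (↑(γ • z) : ℂ) = (a * τ + b) / (c * τ + d) := by
    rw [coe_specialLinearGroup_apply]
    simp [γ, z]
  have hj : denom γ z = c * τ + d := by
    rw [ModularGroup.denom_apply]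
    simp [γ, z]
  have hc : ((γ 1 0 : ℤ) : ℂ) = c := by simp [γ]
  obtain ⟨μ, hμ, law⟩ := thetaTransforms γ z
  rw [hγz, hj, hc] at law
  rw [kronecker_div_eq_of_theta_div_eq hτ (hj ▸ denom_ne_zero γ z) hμ law]
  ring_nf

/-- Modular transformation of the Kronecker series: for `(a b; c d) ∈ SL₂(ℤ)`,
`F_{(aτ+b)/(cτ+d)}(ξ/(cτ+d), α/(cτ+d)) = (cτ+d)·e^{2πicξα/(cτ+d)}·F_τ(ξ, α)`,
whenever both Kronecker series values occurring are defined. -/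
theorem kronecker_modular (a b c d : ℤ) (habcd : a * d - b * c = 1)
    (τ ξ α : ℂ) (hτ : 0 < τ.im)
    (hξ : theta τ ξ ≠ 0) (hα : theta τ α ≠ 0)
    (hξ' : theta (((a : ℂ) * τ + b) / ((c : ℂ) * τ + d)) (ξ / ((c : ℂ) * τ + d)) ≠ 0)
    (hα' : theta (((a : ℂ) * τ + b) / ((c : ℂ) * τ + d)) (α / ((c : ℂ) * τ + d)) ≠ 0) :
    kronecker (((a : ℂ) * τ + b) / ((c : ℂ) * τ + d))
        (ξ / ((c : ℂ) * τ + d)) (α / ((c : ℂ) * τ + d)) =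
      ((c : ℂ) * τ + d) *
        Complex.exp (2 * Real.pi * Complex.I * c * ξ * α / ((c : ℂ) * τ + d)) *
        kronecker τ ξ α :=
  kronecker_modular_general a b c d habcd τ ξ α hτ

end
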